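/- Cluster sampling representation of recall: if a random true cluster c is drawn from 𝒞 with probabilities proportional to p_c > 0, then R = E[ f(c, 𝒞̂)/p_c ] / E[ C(|c|, 2)/p_c ], provided 𝒞 has at least one non-singleton cluster. -/

import Mathlib

open Finset

/-- The set of unordered pairs of distinct elements lying in a common block of `P`. -/
def clPairs {α : Type*} [DecidableEq α] (P : Finset (Finset α)) : Finset (Sym2 α) :=
  (P.sup fun c => c.sym2).filter (fun p => ¬ p.IsDiag)

/-- The block of the partition `P` containing `i`. -/
def partOf {α : Type*} [DecidableEq α] (P : Finset (Finset α)) (i : α) : Finset α :=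
  (P.filter (fun c => i ∈ c)).sup id

/-- `f(c, 𝒞̂) = Σ_{ĉ ∈ 𝒞̂} C(|c ∩ ĉ|, 2)`, real-valued. -/
noncomputable def ffun {α : Type*} [DecidableEq α] (Cp : Finset (Finset α)) (c : Finset α) : ℝ :=
  ∑ d ∈ Cp, ((c ∩ d).card.choose 2 : ℝ)

/-- `g(c, 𝒞̂) = f(c, 𝒞̂) / Σ_{ĉ ∈ 𝒞̂} C(|ĉ|, 2)`. -/
noncomputable def gfun {α : Type*} [DecidableEq α] (Cp : Finset (Finset α)) (c : Finset α) : ℝ :=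
  ffun Cp c / (∑ d ∈ Cp, (d.card.choose 2 : ℝ))

/-! Both sides of the ratio are sums over the true clusters `c`. The co-clustered pairs of `𝒞` split
by block into `C(|c|, 2)` pairs each, and those that are also co-clustered in `𝒞̂` split further by
the blocks `c ∩ ĉ`, which gives `f(c, 𝒞̂)`. Reweighting a term by `π p_c / p_c` multiplies numerator
and denominator by the same `π`, which is nonzero as soon as `𝒞` has a block. -/

section

variable {α : Type*}

lemma disjoint_sym2_of_disjoint {s t : Finset α} (h : Disjoint s t) :
    Disjoint s.sym2 t.sym2 := by
  refine disjoint_left.2 fun p hs ht => ?_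
  induction p with
  | _ a b => exact disjoint_left.1 h (mk_mem_sym2_iff.1 hs).1 (mk_mem_sym2_iff.1 ht).1

variable [DecidableEq α]

lemma card_filter_sym2_not_isDiag (s : Finset α) :
    #{p ∈ s.sym2 | ¬p.IsDiag} = (#s).choose 2 := by
  rw [sym2_eq_image, Sym2.filter_image_mk_not_isDiag, Sym2.card_image_offDiag]

lemma card_biUnion_filter_sym2_not_isDiag {ι : Type*} {s : Finset ι} {f : ι → Finset α}
    (hf : (s : Set ι).PairwiseDisjoint f) :
    #(s.biUnion fun i => {p ∈ (f i).sym2 | ¬p.IsDiag}) = ∑ i ∈ s, (#(f i)).choose 2 := by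
  rw [card_biUnion fun i hi j hj hij =>
    disjoint_filter_filter (disjoint_sym2_of_disjoint (hf hi hj hij))]
  exact sum_congr rfl fun i _ => card_filter_sym2_not_isDiag (f i)

lemma Set.PairwiseDisjoint.inter_product {P Q : Finset (Finset α)}
    (hP : (P : Set (Finset α)).PairwiseDisjoint id) (hQ : (Q : Set (Finset α)).PairwiseDisjoint id) :
    ((P ×ˢ Q : Finset _) : Set (Finset α × Finset α)).PairwiseDisjoint fun cd => cd.1 ∩ cd.2 := by
  rintro ⟨c, d⟩ hcd ⟨c', d'⟩ hcd' hne
  rw [mem_coe, mem_product] at hcd hcd'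
  change Disjoint (c ∩ d) (c' ∩ d')
  by_cases hc : c = c'
  · subst hc
    have hd : d ≠ d' := fun h => hne (by rw [h])
    exact (hQ hcd.2 hcd'.2 hd).mono Finset.inter_subset_right Finset.inter_subset_right
  · exact (hP hcd.1 hcd'.1 hc).mono Finset.inter_subset_left Finset.inter_subset_left

lemma clPairs_eq_biUnion (P : Finset (Finset α)) :
    clPairs P = P.biUnion fun c => {p ∈ c.sym2 | ¬p.IsDiag} := by
  rw [clPairs, sup_eq_biUnion, filter_biUnion]

lemma clPairs_inter_clPairs (P Q : Finset (Finset α)) :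
    clPairs P ∩ clPairs Q = (P ×ˢ Q).biUnion fun cd => {p ∈ (cd.1 ∩ cd.2).sym2 | ¬p.IsDiag} := by
  ext p
  simp only [clPairs_eq_biUnion, mem_inter, mem_biUnion, mem_filter, mem_product, Prod.exists,
    mem_sym2_iff]
  constructor
  · rintro ⟨⟨c, hc, hpc, hp⟩, d, hd, hpd, -⟩
    exact ⟨c, d, ⟨hc, hd⟩, fun a ha => ⟨hpc a ha, hpd a ha⟩, hp⟩
  · rintro ⟨c, d, ⟨hc, hd⟩, hpcd, hp⟩
    exact ⟨⟨c, hc, fun a ha => (hpcd a ha).1, hp⟩,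
      d, hd, fun a ha => (hpcd a ha).2, hp⟩

lemma card_clPairs {P : Finset (Finset α)} (hP : (P : Set (Finset α)).PairwiseDisjoint id) :
    #(clPairs P) = ∑ c ∈ P, (#c).choose 2 := by
  rw [clPairs_eq_biUnion]
  exact card_biUnion_filter_sym2_not_isDiag hP

lemma card_clPairs_inter_clPairs {P Q : Finset (Finset α)}
    (hP : (P : Set (Finset α)).PairwiseDisjoint id) (hQ : (Q : Set (Finset α)).PairwiseDisjoint id) :
    #(clPairs P ∩ clPairs Q) = ∑ c ∈ P, ∑ d ∈ Q, (#(c ∩ d)).choose 2 := by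
  rw [clPairs_inter_clPairs, card_biUnion_filter_sym2_not_isDiag (hP.inter_product hQ),
    sum_product]

end

lemma sum_div_sum_eq_weighted_mean_div {ι : Type*} (s : Finset ι) (w a b : ι → ℝ)
    (hw : ∀ i ∈ s, 0 < w i) (π : ℝ) (hπ : π = 1 / ∑ i ∈ s, w i) :
    (∑ i ∈ s, a i) / ∑ i ∈ s, b i
      = (∑ i ∈ s, (π * w i) * (a i / w i)) / ∑ i ∈ s, (π * w i) * (b i / w i) := by
  obtain rfl | hs := s.eq_empty_or_nonempty
  · simp
  have hπ0 : π ≠ 0 := by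
    rw [hπ]
    exact one_div_ne_zero (sum_pos hw hs).ne'
  have unweight (h : ι → ℝ) : ∑ i ∈ s, (π * w i) * (h i / w i) = π * ∑ i ∈ s, h i := by
    rw [mul_sum]
    exact sum_congr rfl fun i hi => by field_simp [(hw i hi).ne']
  rw [unweight, unweight, mul_div_mul_left _ _ hπ0]

theorem stmt6_general {α : Type*} [DecidableEq α] (D : Finset α) (C Cp : Finpartition D)
    (w : Finset α → ℝ) (hw : ∀ c ∈ C.parts, 0 < w c)
    (π : ℝ) (hπ : π = 1 / ∑ c ∈ C.parts, w c) :
    ((clPairs C.parts ∩ clPairs Cp.parts).card : ℝ) / (clPairs C.parts).card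
      = (∑ c ∈ C.parts, (π * w c) * (ffun Cp.parts c / w c))
          / (∑ c ∈ C.parts, (π * w c) * ((c.card.choose 2 : ℝ) / w c)) := by
  rw [← sum_div_sum_eq_weighted_mean_div _ _ _ _ hw π hπ,
    card_clPairs_inter_clPairs C.disjoint Cp.disjoint, card_clPairs C.disjoint]
  push_cast
  rfl

theorem stmt6 {α : Type*} [DecidableEq α] (D : Finset α) (C Cp : Finpartition D)
    (w : Finset α → ℝ) (hw : ∀ c ∈ C.parts, 0 < w c)
    (hT : 0 < ∑ c ∈ C.parts, (c.card.choose 2 : ℝ))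
    (π : ℝ) (hπ : π = 1 / ∑ c ∈ C.parts, w c) :
    ((clPairs C.parts ∩ clPairs Cp.parts).card : ℝ) / (clPairs C.parts).card
      = (∑ c ∈ C.parts, (π * w c) * (ffun Cp.parts c / w c))
          / (∑ c ∈ C.parts, (π * w c) * ((c.card.choose 2 : ℝ) / w c)) :=
  stmt6_general D C Cp w hw π hπ
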